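/- arXiv:1805.04484 — 2 statements merged into one kernel-verified Lean document; each statement's English description precedes it below -/
import Mathlib

section
/- Let 𝒮 ⊂ ℝ² be a finite set containing two linearly independent vectors and let 𝕊 := Span_ℤ 𝒮 be the set of all finite integer linear combinations of elements of 𝒮. For n ∈ ℕ define S_n := { Σ_{k=1}^M λ_k ξ_k : M ∈ ℕ, ξ_k ∈ 𝕊 and λ_k > 0 for all k, and n² λ_j / (Σ_{k=1}^M λ_k) ∈ ℕ for every j }. Then the union ⋃_{n ∈ ℕ} S_n is dense in ℝ². -/
/-!
Taking a single term (`M = 1`) puts every positive multiple `c • ξ` with `ξ ∈ 𝕊` into every `S_n`,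
since then `n² λ₁ / λ₁ = n²`. As `𝒮` contains a basis `b` of `ℝ²`, the points
`N⁻¹ • ∑ ⌊N aᵢ⌋ • bᵢ` are of this form and converge to `∑ aᵢ • bᵢ`.
-/

open MeasureTheory Real Filter Set Metric
open scoped Topology

noncomputable section

abbrev E2 : Type := EuclideanSpace ℝ (Fin 2)

/-- The set `S_n` of linear combinations `ξ = ∑ λ_k ξ_k` with `ξ_k ∈ 𝕊 = Span_ℤ 𝒮`,
`λ_k > 0`, such that `n² λ_j / ∑ λ_k` is a natural number for every `j`. -/
def Sn (𝒮 : Set E2) (n : ℕ) : Set E2 :=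
  {ξ | ∃ (M : ℕ) (lam : Fin M → ℝ) (ξs : Fin M → E2),
    (∀ k, 0 < lam k) ∧ (∀ k, ξs k ∈ Submodule.span ℤ 𝒮) ∧
    ξ = ∑ k, lam k • ξs k ∧
    ∀ j, ∃ m : ℕ, (n : ℝ)^2 * lam j / (∑ k, lam k) = m}

lemma tendsto_floor_mul_div_atTop (a : ℝ) :
    Tendsto (fun N : ℕ => (⌊N * a⌋ : ℝ) / N) atTop (𝓝 a) := by
  have lower : Tendsto (fun N : ℕ => a - 1 / N) atTop (𝓝 a) := by
    simpa using (tendsto_const_nhds (x := a)).sub tendsto_one_div_atTop_nhds_zero_nat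
  refine tendsto_of_tendsto_of_tendsto_of_le_of_le' lower tendsto_const_nhds ?_ ?_ <;>
    filter_upwards [eventually_gt_atTop 0] with N hN <;>
    have hN' : (0 : ℝ) < N := Nat.cast_pos.2 hN
  · rw [le_div_iff₀ hN', sub_mul, one_div_mul_cancel hN'.ne', mul_comm]
    exact (Int.sub_one_lt_floor _).le
  · rw [div_le_iff₀ hN', mul_comm]
    exact Int.floor_le _

lemma tendsto_inv_smul_sum_floor_smul {ι V : Type*} [Fintype ι] [AddCommGroup V] [Module ℝ V]
    [TopologicalSpace V] [ContinuousAdd V] [ContinuousSMul ℝ V] (a : ι → ℝ) (v : ι → V) :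
    Tendsto (fun N : ℕ => (N : ℝ)⁻¹ • ∑ i, ⌊N * a i⌋ • v i) atTop (𝓝 (∑ i, a i • v i)) := by
  refine (tendsto_finsetSum _ fun i _ => (tendsto_floor_mul_div_atTop (a i)).smul_const (v i)).congr
    fun N => ?_
  simp only [Finset.smul_sum, smul_smul, ← Int.cast_smul_eq_zsmul ℝ, div_eq_inv_mul]

lemma dense_pos_smul_span_int {ι V : Type*} [Finite ι] [AddCommGroup V] [Module ℝ V]
    [TopologicalSpace V] [ContinuousAdd V] [ContinuousSMul ℝ V] (b : Module.Basis ι ℝ V) :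
    Dense {x : V | ∃ c : ℝ, 0 < c ∧ ∃ ξ ∈ Submodule.span ℤ (range b), x = c • ξ} := by
  have := Fintype.ofFinite ι
  intro x
  refine mem_closure_of_tendsto (b.sum_repr x ▸ tendsto_inv_smul_sum_floor_smul (b.repr x) b) ?_
  filter_upwards [eventually_gt_atTop 0] with N hN
  exact ⟨_, inv_pos.2 (Nat.cast_pos.2 hN), _, Submodule.sum_mem _ fun i _ =>
    Submodule.smul_mem _ _ (Submodule.subset_span (mem_range_self i)), rfl⟩

lemma smul_mem_Sn {𝒮 : Set E2} {c : ℝ} (hc : 0 < c) {ξ : E2} (hξ : ξ ∈ Submodule.span ℤ 𝒮)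
    (n : ℕ) : c • ξ ∈ Sn 𝒮 n :=
  ⟨1, fun _ => c, fun _ => ξ, fun _ => hc, fun _ => hξ, by simp,
    fun _ => ⟨n ^ 2, by simp [hc.ne']⟩⟩

theorem union_Sn_dense_general (𝒮 : Set E2)
    (hindep : ∃ b₁ ∈ 𝒮, ∃ b₂ ∈ 𝒮, LinearIndependent ℝ ![b₁, b₂]) :
    Dense (⋃ n : ℕ, Sn 𝒮 n) := by
  obtain ⟨b₁, hb₁, b₂, hb₂, hli⟩ := hindep
  let B := basisOfLinearIndependentOfCardEqFinrank hli (by simp)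
  have hB : range B ⊆ 𝒮 := by
    rw [coe_basisOfLinearIndependentOfCardEqFinrank, range_subset_iff]
    exact Fin.forall_fin_two.2 ⟨hb₁, hb₂⟩
  refine (dense_pos_smul_span_int B).mono ?_
  rintro _ ⟨c, hc, ξ, hξ, rfl⟩
  exact mem_iUnion.2 ⟨0, smul_mem_Sn hc (Submodule.span_mono hB hξ) 0⟩

/-- Lemma 4.4 (Lemma `lemma mis0`): the union of the sets `S_n` is dense in `ℝ²`. -/
theorem union_Sn_dense (𝒮 : Set E2) (hfin : 𝒮.Finite)
    (hindep : ∃ b₁ ∈ 𝒮, ∃ b₂ ∈ 𝒮, LinearIndependent ℝ ![b₁, b₂]) :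
    Dense (⋃ n : ℕ, Sn 𝒮 n) :=
  union_Sn_dense_general 𝒮 hindep
end
end

section
/- There exists a constant C > 0 such that C⁻¹|ξ| ≤ φ(ξ) ≤ C|ξ| for every ξ ∈ ℝ². -/
open MeasureTheory Real Filter Set Metric
open scoped Topology

noncomputable section

/-- The set whose infimum defines the relaxed density `φ(ξ)`. -/
def phiSet (𝒮 : Set E2) (ψ : E2 → ℝ) (ξ : E2) : Set ℝ :=
  {t | ∃ (N : ℕ) (lam : Fin N → ℝ) (ξs : Fin N → E2),
    (∀ k, 0 ≤ lam k) ∧ (∀ k, ξs k ∈ Submodule.span ℤ 𝒮) ∧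
    (∑ k, lam k • ξs k) = ξ ∧ t = ∑ k, lam k * ψ (ξs k)}

/-- The relaxed density `φ(ξ) := inf { ∑ λ_k ψ(ξ_k) : ∑ λ_k ξ_k = ξ, λ_k ≥ 0, ξ_k ∈ 𝕊 }`. -/
def phi (𝒮 : Set E2) (ψ : E2 → ℝ) (ξ : E2) : ℝ := sInf (phiSet 𝒮 ψ ξ)

/-! Lower bound: by discreteness of the lattice, `ψ(η) ≥ c⁻¹|η|² ≥ (δ/c)|η|` for every lattice
vector `η`, and the triangle inequality carries this linear bound through every competitor
`∑ λₖ ξₖ = ξ`. Upper bound: for a basis `b₁, b₂` taken from `𝒮`, writing `ξ = ∑ aᵢ bᵢ` as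
`∑ |aᵢ| (±bᵢ)` gives a competitor of cost at most `c ∑ |aᵢ| |bᵢ|²`, and the coordinates `aᵢ`
depend continuously and linearly on `ξ`. -/

lemma div_mul_le_of_inv_mul_sq_le {δ c x y : ℝ} (hc : 0 < c) (hx : 0 ≤ x)
    (hδ : x ≠ 0 → δ ≤ x) (h : c⁻¹ * x ^ 2 ≤ y) : δ / c * x ≤ y := by
  rcases eq_or_ne x 0 with rfl | hx0
  · simpa using h
  · calc δ / c * x ≤ x / c * x := by gcongr; exact hδ hx0
      _ = c⁻¹ * x ^ 2 := by ring
      _ ≤ y := h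

lemma exists_pos_inv_mul_le_and_le_mul {α : Type*} {f x : α → ℝ} {κ M : ℝ} (hκ : 0 < κ)
    (hx : ∀ a, 0 ≤ x a) (h : ∀ a, κ * x a ≤ f a ∧ f a ≤ M * x a) :
    ∃ C > 0, ∀ a, C⁻¹ * x a ≤ f a ∧ f a ≤ C * x a := by
  have hC : 0 < max κ⁻¹ M := lt_max_of_lt_left (inv_pos.2 hκ)
  refine ⟨max κ⁻¹ M, hC, fun a => ⟨?_, ?_⟩⟩
  · have : (max κ⁻¹ M)⁻¹ ≤ κ := inv_le_of_inv_le₀ hκ (le_max_left _ _)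
    exact (mul_le_mul_of_nonneg_right this (hx a)).trans (h a).1
  · exact (h a).2.trans (mul_le_mul_of_nonneg_right (le_max_right _ _) (hx a))

lemma Module.Basis.exists_abs_repr_le_mul_norm {E ι : Type*} [NormedAddCommGroup E]
    [NormedSpace ℝ E] [Fintype ι] (B : Module.Basis ι ℝ E) :
    ∃ K, ∀ (ξ : E) (i : ι), |B.repr ξ i| ≤ K * ‖ξ‖ := by
  let L : E →L[ℝ] ι → ℝ := B.equivFunL
  refine ⟨‖L‖, fun ξ i => ?_⟩
  calc |B.repr ξ i| = ‖L ξ i‖ := rfl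
    _ ≤ ‖L ξ‖ := norm_le_pi_norm _ i
    _ ≤ ‖L‖ * ‖ξ‖ := L.le_opNorm ξ

lemma exists_basis_of_linearIndependent_pair {E : Type*} [AddCommGroup E] [Module ℝ E]
    (hE : Module.finrank ℝ E = 2) {𝒮 : Set E}
    (hindep : ∃ b₁ ∈ 𝒮, ∃ b₂ ∈ 𝒮, LinearIndependent ℝ ![b₁, b₂]) :
    ∃ B : Module.Basis (Fin 2) ℝ E, ∀ i, B i ∈ 𝒮 := by
  obtain ⟨b₁, hb₁, b₂, hb₂, hind⟩ := hindep
  have hcard : Fintype.card (Fin 2) = Module.finrank ℝ E := by simp [hE]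
  refine ⟨basisOfLinearIndependentOfCardEqFinrank hind hcard, fun i => ?_⟩
  rw [coe_basisOfLinearIndependentOfCardEqFinrank]
  fin_cases i <;> simpa

section phiSet

variable {𝒮 : Set E2} {ψ : E2 → ℝ}

lemma mul_norm_le_of_mem_phiSet {κ : ℝ} (hκ : 0 ≤ κ)
    (hψ : ∀ η ∈ Submodule.span ℤ 𝒮, κ * ‖η‖ ≤ ψ η) {ξ : E2} {t : ℝ}
    (ht : t ∈ phiSet 𝒮 ψ ξ) : κ * ‖ξ‖ ≤ t := by
  obtain ⟨N, lam, ξs, hlam, hspan, rfl, rfl⟩ := ht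
  calc κ * ‖∑ k, lam k • ξs k‖ ≤ κ * ∑ k, ‖lam k • ξs k‖ := by gcongr; exact norm_sum_le _ _
    _ = ∑ k, lam k * (κ * ‖ξs k‖) := by
      rw [Finset.mul_sum]
      refine Finset.sum_congr rfl fun k _ => ?_
      rw [norm_smul, Real.norm_of_nonneg (hlam k)]
      ring
    _ ≤ ∑ k, lam k * ψ (ξs k) := by
      gcongr with k
      exacts [hlam k, hψ _ (hspan k)]

lemma sum_abs_mul_mem_phiSet {n : ℕ} (v : Fin n → E2) (hv : ∀ i, v i ∈ Submodule.span ℤ 𝒮)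
    (a : Fin n → ℝ) :
    ∑ i, |a i| * ψ (if 0 ≤ a i then v i else -v i) ∈ phiSet 𝒮 ψ (∑ i, a i • v i) := by
  refine ⟨n, fun i => |a i|, fun i => if 0 ≤ a i then v i else -v i,
    fun i => abs_nonneg _, fun i => ?_, Finset.sum_congr rfl fun i _ => ?_, rfl⟩
  · dsimp only
    split_ifs
    exacts [hv i, Submodule.neg_mem _ (hv i)]
  · dsimp only
    split_ifs with ha
    · rw [abs_of_nonneg ha]
    · rw [abs_of_neg (not_le.1 ha), smul_neg, neg_smul, neg_neg]

lemma exists_mem_phiSet_le_mul_norm (B : Module.Basis (Fin 2) ℝ E2)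
    (hB : ∀ i, B i ∈ Submodule.span ℤ 𝒮) {c : ℝ} (hc : 0 ≤ c)
    (hψ : ∀ ξ : E2, ψ ξ ≤ c * ‖ξ‖ ^ 2) :
    ∃ M, ∀ ξ : E2, ∃ t ∈ phiSet 𝒮 ψ ξ, t ≤ M * ‖ξ‖ := by
  obtain ⟨K, hK⟩ := B.exists_abs_repr_le_mul_norm
  refine ⟨∑ i, K * c * ‖B i‖ ^ 2, fun ξ => ?_⟩
  have hmem := sum_abs_mul_mem_phiSet (ψ := ψ) B hB (B.repr ξ)
  rw [B.sum_repr] at hmem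
  refine ⟨_, hmem, ?_⟩
  rw [Finset.sum_mul]
  refine Finset.sum_le_sum fun i _ => ?_
  have hψB : ψ (if 0 ≤ B.repr ξ i then B i else -B i) ≤ c * ‖B i‖ ^ 2 := by
    refine (hψ _).trans_eq ?_
    split_ifs <;> simp only [norm_neg]
  calc |B.repr ξ i| * ψ (if 0 ≤ B.repr ξ i then B i else -B i)
      ≤ |B.repr ξ i| * (c * ‖B i‖ ^ 2) := by gcongr
    _ ≤ (K * ‖ξ‖) * (c * ‖B i‖ ^ 2) := by gcongr; exact hK ξ i
    _ = K * c * ‖B i‖ ^ 2 * ‖ξ‖ := by ring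

end phiSet

theorem phi_bounds_general (𝒮 : Set E2)
    (hindep : ∃ b₁ ∈ 𝒮, ∃ b₂ ∈ 𝒮, LinearIndependent ℝ ![b₁, b₂])
    (hdisc : ∃ δ > 0, ∀ ξ ∈ Submodule.span ℤ 𝒮, ξ ≠ 0 → δ ≤ ‖ξ‖)
    (ψ : E2 → ℝ) (c : ℝ) (hc : 0 < c)
    (hψ : ∀ ξ : E2, c⁻¹ * ‖ξ‖^2 ≤ ψ ξ ∧ ψ ξ ≤ c * ‖ξ‖^2) :
    ∃ C > 0, ∀ ξ : E2, C⁻¹ * ‖ξ‖ ≤ phi 𝒮 ψ ξ ∧ phi 𝒮 ψ ξ ≤ C * ‖ξ‖ := by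
  obtain ⟨δ, hδ, hdisc⟩ := hdisc
  have hlattice : ∀ η ∈ Submodule.span ℤ 𝒮, δ / c * ‖η‖ ≤ ψ η := fun η hη =>
    div_mul_le_of_inv_mul_sq_le hc (norm_nonneg η)
      (fun h => hdisc η hη (norm_ne_zero_iff.1 h)) (hψ η).1
  have hlower : ∀ ξ, ∀ t ∈ phiSet 𝒮 ψ ξ, δ / c * ‖ξ‖ ≤ t := fun ξ t =>
    mul_norm_le_of_mem_phiSet (by positivity) hlattice
  obtain ⟨B, hB⟩ := exists_basis_of_linearIndependent_pair (by simp) hindep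
  obtain ⟨M, hM⟩ := exists_mem_phiSet_le_mul_norm B (fun i => Submodule.subset_span (hB i))
    hc.le fun ξ => (hψ ξ).2
  refine exists_pos_inv_mul_le_and_le_mul (M := M) (div_pos hδ hc) (fun ξ => norm_nonneg ξ)
    fun ξ => ?_
  obtain ⟨t, ht, htM⟩ := hM ξ
  exact ⟨le_csInf ⟨t, ht⟩ (hlower ξ), (csInf_le ⟨_, hlower ξ⟩ ht).trans htM⟩

/-- Proposition 3.5 (part): there is a constant  with
 for every . -/
theorem phi_bounds (𝒮 : Set E2) (hfin : 𝒮.Finite)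
    (hindep : ∃ b₁ ∈ 𝒮, ∃ b₂ ∈ 𝒮, LinearIndependent ℝ ![b₁, b₂])
    (hdisc : ∃ δ > 0, ∀ ξ ∈ Submodule.span ℤ 𝒮, ξ ≠ 0 → δ ≤ ‖ξ‖)
    (ψ : E2 → ℝ) (c : ℝ) (hc : 0 < c)
    (hψ : ∀ ξ : E2, c⁻¹ * ‖ξ‖^2 ≤ ψ ξ ∧ ψ ξ ≤ c * ‖ξ‖^2) :
    ∃ C > 0, ∀ ξ : E2, C⁻¹ * ‖ξ‖ ≤ phi 𝒮 ψ ξ ∧ phi 𝒮 ψ ξ ≤ C * ‖ξ‖ :=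
  phi_bounds_general 𝒮 hindep hdisc ψ c hc hψ
end
end
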